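/- arXiv:1011.2264 — 3 statements merged into one kernel-verified Lean document; each statement's English description precedes it below -/
import Mathlib

section
/- Substituting c = a + b and d = ab + ba into any cd-word of degree n yields a homogeneous polynomial of degree n in the noncommuting variables a, b in which the coefficient of the word a^n is 1 if the cd-word is c^n and 0 otherwise. -/
noncomputable section

/-- The free noncommutative algebra `ℤ⟨a,b⟩`, realized as the monoid algebra of the
free monoid on two generators. -/
abbrev FreeAB := MonoidAlgebra ℤ (FreeMonoid Bool)

/-- The generator `a`. -/
def genA : FreeAB := MonoidAlgebra.single (FreeMonoid.of false) 1

/-- The generator `b`. -/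
def genB : FreeAB := MonoidAlgebra.single (FreeMonoid.of true) 1

/-- Substitution of a cd-word (`false` = c, `true` = d): each `c` is replaced by `a + b`
and each `d` by `ab + ba`, and the results are multiplied in order. -/
def cdSubst : List Bool → FreeAB
  | [] => 1
  | x :: w => (if x then genA * genB + genB * genA else genA + genB) * cdSubst w

/-- Degree of a cd-word: `c` has degree 1, `d` has degree 2. -/
def cdDeg (w : List Bool) : ℕ := (w.map (fun x => if x then 2 else 1)).sum

/-! The algebra map `ℤ⟨a,b⟩ → ℤ` with `a ↦ 1`, `b ↦ 0` kills every word containing `b`, so on a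
polynomial homogeneous of degree `n` it reads off the coefficient of `aⁿ`. It sends `c = a + b` to `1`
and `d = ab + ba` to `0`, hence the substituted cd-word to `1` exactly when the word is a power of
`c`. Homogeneity holds because `a + b` and `ab + ba` are homogeneous of degrees `1` and `2`. -/

open FreeMonoid

theorem List.prod_map_ite_eq_one_zero {α M : Type*} [DecidableEq α] [MulZeroOneClass M]
    (a : α) (l : List α) :
    (l.map fun x => if x = a then (1 : M) else 0).prod =
      if l = List.replicate l.length a then 1 else 0 := by
  induction l with
  | nil => exact (if_pos rfl).symm
  | cons x t ih =>
    rw [List.map_cons, List.prod_cons, ih, ite_zero_mul_ite_zero, mul_one, List.length_cons,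
      List.replicate_succ]
    simp only [List.cons.injEq]

namespace MonoidAlgebra

variable {k α : Type*}

section Semiring

variable [Semiring k]

def IsHomogeneous (f : MonoidAlgebra k (FreeMonoid α)) (n : ℕ) : Prop :=
  ∀ m ∈ f.coeff.support, m.length = n

theorem isHomogeneous_single (m : FreeMonoid α) (r : k) : IsHomogeneous (single m r) m.length :=
  fun _ hm => by rw [Finset.mem_singleton.1 (Finsupp.support_single_subset hm)]

theorem isHomogeneous_one : IsHomogeneous (1 : MonoidAlgebra k (FreeMonoid α)) 0 :=
  isHomogeneous_single 1 1

theorem IsHomogeneous.add {f g : MonoidAlgebra k (FreeMonoid α)} {n : ℕ}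
    (hf : IsHomogeneous f n) (hg : IsHomogeneous g n) : IsHomogeneous (f + g) n := by
  classical
  intro m hm
  rcases Finset.mem_union.1 (Finsupp.support_add hm) with h | h
  exacts [hf m h, hg m h]

theorem IsHomogeneous.mul {f g : MonoidAlgebra k (FreeMonoid α)} {i j : ℕ}
    (hf : IsHomogeneous f i) (hg : IsHomogeneous g j) : IsHomogeneous (f * g) (i + j) := by
  classical
  intro m hm
  obtain ⟨x, hx, y, hy, rfl⟩ := Finset.mem_mul.1 (support_coeff_mul_subset f g hm)
  rw [FreeMonoid.length_mul, hf x hx, hg y hy]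

end Semiring

theorem lift_ite_eq_coeff_replicate [CommSemiring k] [DecidableEq α] (a : α)
    {f : MonoidAlgebra k (FreeMonoid α)} {n : ℕ} (hf : IsHomogeneous f n) :
    lift k k (FreeMonoid α) (FreeMonoid.lift fun x => if x = a then 1 else 0) f =
      f.coeff (ofList (List.replicate n a)) := by
  rw [lift_apply, Finsupp.sum_eq_single (ofList (List.replicate n a)) ?_ fun _ => zero_smul _ _]
  · rw [FreeMonoid.lift_apply, toList_ofList, List.prod_map_ite_eq_one_zero, List.length_replicate,
      if_pos rfl, smul_eq_mul, mul_one]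
  · intro m hm hne
    rw [FreeMonoid.lift_apply, List.prod_map_ite_eq_one_zero, if_neg, smul_zero]
    intro h
    exact hne (by rw [← ofList_toList m, h, ← length, hf m (Finsupp.mem_support_iff.2 hm)])

end MonoidAlgebra

open MonoidAlgebra

theorem cdDeg_cons (x : Bool) (w : List Bool) : cdDeg (x :: w) = (if x then 2 else 1) + cdDeg w :=
  rfl

theorem isHomogeneous_cdSubst (w : List Bool) : (cdSubst w).IsHomogeneous (cdDeg w) := by
  induction w with
  | nil => exact isHomogeneous_one
  | cons x t ih =>
    have hA : genA.IsHomogeneous 1 := isHomogeneous_single _ _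
    have hB : genB.IsHomogeneous 1 := isHomogeneous_single _ _
    rw [cdSubst, cdDeg_cons]
    refine IsHomogeneous.mul ?_ ih
    cases x
    · exact hA.add hB
    · exact (hA.mul hB).add (hB.mul hA)

theorem lift_cdSubst (w : List Bool) :
    lift ℤ ℤ (FreeMonoid Bool) (FreeMonoid.lift fun x => if x = false then 1 else 0) (cdSubst w) =
      if w = List.replicate (cdDeg w) false then 1 else 0 := by
  induction w with
  | nil => simp [cdSubst, cdDeg]
  | cons x t ih =>
    cases x <;> simp [cdSubst, cdDeg_cons, ih, genA, genB, List.replicate_succ, add_comm]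

/-- Substituting `c = a+b`, `d = ab+ba` into a cd-word of degree `n` yields a homogeneous
polynomial of degree `n` in which the coefficient of `aⁿ` is `1` if the cd-word is `cⁿ`
and `0` otherwise. -/
theorem cd_subst_coeff_an (n : ℕ) (w : List Bool) (hw : cdDeg w = n) :
    (∀ m ∈ (cdSubst w).coeff.support, (FreeMonoid.toList m).length = n) ∧
    (cdSubst w).coeff (FreeMonoid.ofList (List.replicate n false)) =
      (if w = List.replicate n false then 1 else 0) := by
  subst hw
  refine ⟨isHomogeneous_cdSubst w, ?_⟩
  rw [← lift_ite_eq_coeff_replicate false (isHomogeneous_cdSubst w), lift_cdSubst]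
end
end

section
/- The substitutions of the distinct cd-words of degree n (under c ↦ a+b, d ↦ ab+ba) are linearly independent elements of the free noncommutative algebra ℤ⟨a,b⟩; consequently, if a polynomial in a,b of degree n lies in the span of these substitutions, its cd-index expression is unique. -/
noncomputable section

/-!
Write `D_x` for left division by the letter `x` in `ℤ⟨a,b⟩`. Combining `D_a`, `D_b` and left
multiplication by `b` gives, for each letter `x` of the cd-alphabet, an operator `cdQuot x` that
strips a leading `x` from the substitution of a cd-word and kills the substitutions of the empty
word and of words with the other first letter. Composing them along a word `w` and then taking
the constant coefficient gives a linear functional that is `1` on `cdSubst w` and `0` on every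
other `cdSubst v`; hence the substitutions of all cd-words, of all degrees at once, are linearly
independent.
-/

open Module MonoidAlgebra

section LetterQuotients

variable {R M α : Type*} [CommRing R] [AddCommGroup M] [Module R M]

def wordDual (ε : Dual R M) (δ : α → M →ₗ[R] M) : List α → Dual R M
  | [] => ε
  | x :: w => wordDual ε δ w ∘ₗ δ x

variable {f : List α → M} {ε : Dual R M} {δ : α → M →ₗ[R] M}

theorem wordDual_apply [DecidableEq α]
    (hε_nil : ε (f []) = 1) (hε_cons : ∀ x w, ε (f (x :: w)) = 0)
    (hδ_nil : ∀ x, δ x (f []) = 0) (hδ_self : ∀ x w, δ x (f (x :: w)) = f w)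
    (hδ_ne : ∀ x y w, x ≠ y → δ x (f (y :: w)) = 0) (w v : List α) :
    wordDual ε δ w (f v) = if w = v then 1 else 0 := by
  induction w generalizing v with
  | nil => cases v <;> simp [wordDual, hε_nil, hε_cons]
  | cons x w ih =>
    rcases v with _ | ⟨y, v⟩
    · simp [wordDual, hδ_nil]
    · by_cases hxy : x = y
      · subst hxy
        simp [wordDual, hδ_self, ih]
      · simp [wordDual, hδ_ne x y v hxy, hxy]

theorem linearIndependent_of_letterQuotients
    (hε_nil : ε (f []) = 1) (hε_cons : ∀ x w, ε (f (x :: w)) = 0)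
    (hδ_nil : ∀ x, δ x (f []) = 0) (hδ_self : ∀ x w, δ x (f (x :: w)) = f w)
    (hδ_ne : ∀ x y w, x ≠ y → δ x (f (y :: w)) = 0) :
    LinearIndependent R f := by
  classical
  have hdual := wordDual_apply hε_nil hε_cons hδ_nil hδ_self hδ_ne
  exact .of_pairwise_dual_eq_zero_one f (wordDual ε δ) (fun w v hwv => by simp [hdual, hwv])
    (fun w => by simp [hdual])

end LetterQuotients

namespace FreeMonoid

variable {α : Type*}

lemma of_mul_ne_one (x : α) (m : FreeMonoid α) : of x * m ≠ 1 :=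
  fun h => List.cons_ne_nil _ _ (congrArg toList h)

lemma of_mul_ne_of_mul {x y : α} (h : x ≠ y) (m m' : FreeMonoid α) : of x * m ≠ of y * m' :=
  fun hm => h (List.cons.inj (congrArg toList hm)).1

end FreeMonoid

namespace MonoidAlgebra

variable {k G : Type*} [Semiring k]

def lcoeff (m : G) : MonoidAlgebra k G →ₗ[k] k :=
  Finsupp.lapply m ∘ₗ (coeffLinearEquiv k).toLinearMap

@[simp]
lemma lcoeff_apply (m : G) (x : MonoidAlgebra k G) : lcoeff m x = x.coeff m := rfl

section LeftDivOf

variable [Mul G] [IsLeftCancelMul G]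

def leftDivOf (g : G) : MonoidAlgebra k G →ₗ[k] MonoidAlgebra k G :=
  (coeffLinearEquiv k).symm.toLinearMap ∘ₗ Finsupp.lcomapDomain (g * ·) (mul_right_injective g)
    ∘ₗ (coeffLinearEquiv k).toLinearMap

@[simp]
lemma coeff_leftDivOf (g : G) (x : MonoidAlgebra k G) (m : G) :
    (leftDivOf g x).coeff m = x.coeff (g * m) := rfl

@[simp]
lemma leftDivOf_single_mul (g : G) (r : k) (x : MonoidAlgebra k G) :
    leftDivOf g (single g r * x) = r • x := by
  ext m
  simpa using coeff_single_mul_eq_mul_coeff m fun _ _ => (mul_right_injective g).eq_iff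

end LeftDivOf

section FreeMonoid

variable {α : Type*}

@[simp]
lemma coeff_one_single_of_mul (x : α) (r : k) (f : MonoidAlgebra k (FreeMonoid α)) :
    (single (FreeMonoid.of x) r * f).coeff 1 = 0 :=
  coeff_single_mul_of_forall_mul_ne _ _ (FreeMonoid.of_mul_ne_one x)

lemma leftDivOf_single_of_mul_of_ne {x y : α} (h : x ≠ y) (r : k)
    (f : MonoidAlgebra k (FreeMonoid α)) :
    leftDivOf (FreeMonoid.of x) (single (FreeMonoid.of y) r * f) = 0 := by
  ext m
  simpa using coeff_single_mul_of_forall_mul_ne _ _ fun d =>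
    (FreeMonoid.of_mul_ne_of_mul h m d).symm

@[simp]
lemma leftDivOf_of_one (x : α) :
    leftDivOf (FreeMonoid.of x) (1 : MonoidAlgebra k (FreeMonoid α)) = 0 := by
  ext m
  simp [one_def]

end FreeMonoid

end MonoidAlgebra

open FreeMonoid (of)

@[simp]
lemma coeff_one_genA_mul (f : FreeAB) : (genA * f).coeff 1 = 0 := coeff_one_single_of_mul _ _ _

@[simp]
lemma coeff_one_genB_mul (f : FreeAB) : (genB * f).coeff 1 = 0 := coeff_one_single_of_mul _ _ _

@[simp]
lemma leftDivOf_genA_mul (f : FreeAB) : leftDivOf (of false) (genA * f) = f := by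
  simp [genA]

@[simp]
lemma leftDivOf_genB_mul (f : FreeAB) : leftDivOf (of true) (genB * f) = f := by
  simp [genB]

@[simp]
lemma leftDivOf_of_true_genA_mul (f : FreeAB) : leftDivOf (of true) (genA * f) = 0 :=
  leftDivOf_single_of_mul_of_ne (by decide) _ _

@[simp]
lemma leftDivOf_of_false_genB_mul (f : FreeAB) : leftDivOf (of false) (genB * f) = 0 :=
  leftDivOf_single_of_mul_of_ne (by decide) _ _

/-- With `D_x := leftDivOf (of x)`, `D_a - D_b` kills `(a + b) f` and sends `(ab + ba) f` to
`(b - a) f`, from which `D_b` recovers `f`. -/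
def dQuot : FreeAB →ₗ[ℤ] FreeAB :=
  leftDivOf (of true) ∘ₗ (leftDivOf (of false) - leftDivOf (of true))

def cQuot : FreeAB →ₗ[ℤ] FreeAB :=
  leftDivOf (of false) - LinearMap.mulLeft ℤ genB ∘ₗ dQuot

def cdQuot (x : Bool) : FreeAB →ₗ[ℤ] FreeAB :=
  if x then dQuot else cQuot

lemma lcoeff_one_cdSubst_nil : lcoeff 1 (cdSubst []) = 1 := by
  simp [cdSubst, one_def]

lemma lcoeff_one_cdSubst_cons (x : Bool) (w : List Bool) : lcoeff 1 (cdSubst (x :: w)) = 0 := by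
  cases x <;> simp [cdSubst, add_mul, mul_assoc]

lemma cdQuot_cdSubst_nil (x : Bool) : cdQuot x (cdSubst []) = 0 := by
  cases x <;> simp [cdQuot, cQuot, dQuot, cdSubst]

lemma cdQuot_cdSubst_cons (x y : Bool) (w : List Bool) :
    cdQuot x (cdSubst (y :: w)) = if x = y then cdSubst w else 0 := by
  cases x <;> cases y <;> simp [cdQuot, cQuot, dQuot, cdSubst, add_mul, mul_assoc]

theorem linearIndependent_cdSubst : LinearIndependent ℤ cdSubst :=
  linearIndependent_of_letterQuotients lcoeff_one_cdSubst_nil lcoeff_one_cdSubst_cons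
    cdQuot_cdSubst_nil (fun x w => by simp [cdQuot_cdSubst_cons])
    (fun x y w hxy => by simp [cdQuot_cdSubst_cons, hxy])

/-- The substitutions of the distinct cd-words of degree `n` are linearly independent in
`ℤ⟨a,b⟩`; consequently a cd-index expression for an element of their span is unique. -/
theorem cd_subst_linearIndependent (n : ℕ) :
    LinearIndependent ℤ (fun w : {w : List Bool // cdDeg w = n} => cdSubst w.1) ∧
    ∀ φ ψ : {w : List Bool // cdDeg w = n} →₀ ℤ,
      (φ.sum fun w c => c • cdSubst w.1) = (ψ.sum fun w c => c • cdSubst w.1) → φ = ψ := by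
  have hli : LinearIndependent ℤ (fun w : {w : List Bool // cdDeg w = n} => cdSubst w.1) :=
    linearIndependent_cdSubst.comp _ Subtype.val_injective
  refine ⟨hli, fun φ ψ h => hli.finsuppLinearCombination_injective ?_⟩
  simpa only [Finsupp.linearCombination_apply] using h
end
end

section
/- With the operator d on symmetric vectors defined by hd = (0,…,0, g_{⌊d/2⌋}, 0,…,0) ∈ ℤ^{d+3} (entry g_{⌊d/2⌋} in the middle position) when d is even, and hd = 0 ∈ ℤ^{d+3} when d is odd, the polynomial identity (hd)(x) = (x−1)g(x) + U_{≤m}[(1−x)g(x)] holds, where m = ⌊(d+1)/2⌋ and U_{≤m} truncates a polynomial to its terms of degree at most m. -/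
/-- The g-vector of a vector `h = (h_0, h_1, …)`: `g_0 = h_0`, `g_i = h_i − h_{i−1}`. -/
def gvec (h : ℕ → ℤ) : ℕ → ℤ
  | 0 => h 0
  | i + 1 => h (i + 1) - h i

/-- The operator `c` on a symmetric vector `h = (h_0,…,h_d)` (encoded as a function
`ℕ → ℤ` supported on `0..d`): the result, supported on `0..d+1`, is
`(g_0,…,g_{⌊d/2⌋}, g_{⌊d/2⌋},…,g_0)` if `d` is even and
`(g_0,…,g_{⌊d/2⌋}, 0, g_{⌊d/2⌋},…,g_0)` if `d` is odd. -/
def opc (d : ℕ) (h : ℕ → ℤ) : ℕ → ℤ := fun j =>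
  if j ≤ d / 2 then gvec h j
  else if j ≤ d + 1 ∧ d + 1 - j ≤ d / 2 then gvec h (d + 1 - j)
  else 0

/-- The operator `d` on a symmetric vector `h = (h_0,…,h_d)`: the result, supported on
`0..d+2`, has `g_{⌊d/2⌋}` in the middle position and zeros elsewhere when `d` is even,
and is the zero vector when `d` is odd. -/
def opd (d : ℕ) (h : ℕ → ℤ) : ℕ → ℤ := fun j =>
  if d % 2 = 0 ∧ j = (d + 2) / 2 then gvec h (d / 2) else 0

open Polynomial

/-- Truncation of a polynomial to its terms of degree at most `m`. -/
noncomputable def truncLE (m : ℕ) (p : Polynomial ℤ) : Polynomial ℤ :=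
  ∑ i ∈ Finset.range (m + 1), C (p.coeff i) * X ^ i

/-! With `q = (1 - X) * g`, the right-hand side is `truncLE m q - q`, minus the part of `q` above
degree `m`. Now `q` has degree at most `⌊d/2⌋ + 1`, with coefficient `-g_{⌊d/2⌋}` there. For odd `d`
that degree is `m`, so nothing is cut off; for even `d` it is `m + 1`, and exactly the monomial
`-g_{d/2} X^{d/2+1}` is cut off. -/

theorem truncLE_eq_self {m : ℕ} {p : ℤ[X]} (hp : p.natDegree ≤ m) : truncLE m p = p :=
  (p.as_sum_range_C_mul_X_pow' (Nat.lt_succ_of_le hp)).symm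

theorem truncLE_add_C_mul_X_pow {m : ℕ} {p : ℤ[X]} (hp : p.natDegree ≤ m + 1) :
    truncLE m p + C (p.coeff (m + 1)) * X ^ (m + 1) = p := by
  rw [truncLE, ← Finset.sum_range_succ]
  exact (p.as_sum_range_C_mul_X_pow' (Nat.lt_succ_of_le hp)).symm

section OneSubXMul

variable {R : Type*} [CommRing R] (a : ℕ → R) (n : ℕ)

theorem natDegree_one_sub_X_mul_sum_le :
    ((1 - X) * ∑ i ∈ Finset.range (n + 1), C (a i) * X ^ i).natDegree ≤ n + 1 := by
  have h_one_sub_X : (1 - X : R[X]).natDegree ≤ 1 :=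
    natDegree_sub_le_of_le (natDegree_one.trans_le zero_le_one) natDegree_X_le
  have h_sum : (∑ i ∈ Finset.range (n + 1), C (a i) * X ^ i).natDegree ≤ n :=
    natDegree_sum_le_of_forall_le _ _ fun i hi =>
      (natDegree_C_mul_X_pow_le _ _).trans (Nat.lt_succ_iff.mp (Finset.mem_range.mp hi))
  exact (natDegree_mul_le_of_le h_one_sub_X h_sum).trans_eq (add_comm 1 n)

theorem coeff_one_sub_X_mul_sum_succ :
    ((1 - X) * ∑ i ∈ Finset.range (n + 1), C (a i) * X ^ i).coeff (n + 1) = -a n := by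
  simp [sub_mul, coeff_X_mul, coeff_C_mul, coeff_X_pow]

end OneSubXMul

theorem sum_opd_of_even {d : ℕ} (h : ℕ → ℤ) (hd : Even d) :
    ∑ j ∈ Finset.range (d + 3), C (opd d h j) * X ^ j = C (gvec h (d / 2)) * X ^ (d / 2 + 1) := by
  have hd2 := Nat.even_iff.mp hd
  rw [Finset.sum_eq_single (d / 2 + 1)]
  · simp [opd, hd2]
  · intro j _ hj
    simp [opd, hj]
  · intro hj
    exact absurd (Finset.mem_range.mpr (by omega)) hj

theorem sum_opd_of_odd {d : ℕ} (h : ℕ → ℤ) (hd : Odd d) :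
    ∑ j ∈ Finset.range (d + 3), C (opd d h j) * X ^ j = 0 :=
  Finset.sum_eq_zero fun j _ => by simp [opd, Nat.odd_iff.mp hd]

theorem opd_poly_general (d : ℕ) (h : ℕ → ℤ) :
    ∑ j ∈ Finset.range (d + 3), C (opd d h j) * X ^ j =
      (X - 1) * (∑ i ∈ Finset.range (d / 2 + 1), C (gvec h i) * X ^ i) +
        truncLE ((d + 1) / 2)
          ((1 - X) * ∑ i ∈ Finset.range (d / 2 + 1), C (gvec h i) * X ^ i) := by
  set q := (1 - X) * ∑ i ∈ Finset.range (d / 2 + 1), C (gvec h i) * X ^ i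
  have hq : q.natDegree ≤ d / 2 + 1 := natDegree_one_sub_X_mul_sum_le _ _
  rw [show (X - 1) * ∑ i ∈ Finset.range (d / 2 + 1), C (gvec h i) * X ^ i = -q by ring]
  rcases Nat.even_or_odd d with hd | hd
  · have hm : (d + 1) / 2 = d / 2 := by grind
    have hsplit := truncLE_add_C_mul_X_pow hq
    rw [coeff_one_sub_X_mul_sum_succ, map_neg] at hsplit
    rw [sum_opd_of_even h hd, hm]
    linear_combination -hsplit
  · have hm : (d + 1) / 2 = d / 2 + 1 := by grind
    rw [sum_opd_of_odd h hd, hm, truncLE_eq_self hq, neg_add_cancel]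

/-- In polynomial form, the operator `d` satisfies
`(hd)(x) = (x−1)g(x) + U_{≤m}[(1−x)g(x)]` with `m = ⌊(d+1)/2⌋`. -/
theorem opd_poly (d : ℕ) (h : ℕ → ℤ) (hsym : ∀ i ≤ d, h i = h (d - i)) :
    ∑ j ∈ Finset.range (d + 3), C (opd d h j) * X ^ j =
      (X - 1) * (∑ i ∈ Finset.range (d / 2 + 1), C (gvec h i) * X ^ i) +
        truncLE ((d + 1) / 2)
          ((1 - X) * ∑ i ∈ Finset.range (d / 2 + 1), C (gvec h i) * X ^ i) :=
  opd_poly_general d h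
end
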